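/- arXiv:1407.8421 — 4 statements merged into one kernel-verified Lean document; each statement's English description precedes it below -/
import Mathlib

section
/- The sequence (p_k) is strictly increasing: p_{k-1} < p_k for every k ≥ 1. -/
/-!
Subtracting the equations defining `p_k` and `p_{k+1}` gives
`2 (p_{k+1} - p_k) = (k+1) ((B(p_k) - B(p_{k-1})) + (B(p_k) - B(p_{k+1})))`.
Since `B` is strictly increasing on `[0,1]` (its derivative telescopes to
`C(r,s) s p^{r-s} (1-p)^{s-1}`), `p_{k-1} < p_k` and `p_{k+1} ≤ p_k` would make the right-hand
side positive and the left-hand side nonpositive; so the claim follows by induction on `k`.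
-/

/-- `B r s p = ∑_{i=0}^{s-1} C(r,i) p^{r-i} (1-p)^i`, the probability that a
Binomial(r,p) random variable exceeds `r - s`. -/
noncomputable def B (r s : ℕ) (p : ℝ) : ℝ :=
  ∑ i ∈ Finset.range s, (r.choose i : ℝ) * p ^ (r - i) * (1 - p) ^ i

/-- `f k (x, p) = (k+1) B_{r,s}(p) - k B_{r,s}(x) - 2x + 1`. -/
noncomputable def f (r s k : ℕ) (x p : ℝ) : ℝ :=
  ((k : ℝ) + 1) * B r s p - (k : ℝ) * B r s x - 2 * x + 1

open Finset Set

theorem hasDerivAt_B (r s : ℕ) (x : ℝ) :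
    HasDerivAt (B r s) ((r.choose s : ℝ) * s * x ^ (r - s) * (1 - x) ^ (s - 1)) x := by
  set G : ℕ → ℝ := fun i => (r.choose i : ℝ) * i * x ^ (r - i) * (1 - x) ^ (i - 1) with hG
  have hterm : ∀ i, HasDerivAt (fun p : ℝ => (r.choose i : ℝ) * p ^ (r - i) * (1 - p) ^ i)
      (G (i + 1) - G i) x := by
    intro i
    have hchoose : (r.choose (i + 1) : ℝ) * ((i + 1 : ℕ) : ℝ) = r.choose i * ((r - i : ℕ) : ℝ) := by
      exact_mod_cast Nat.choose_succ_right_eq r i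
    have hder := ((hasDerivAt_pow (r - i) x).const_mul (r.choose i : ℝ)).fun_mul
      (((hasDerivAt_id' x).const_sub 1).fun_pow i)
    refine hder.congr_deriv ?_
    simp only [hG, Nat.add_sub_cancel, Nat.sub_sub]
    rw [hchoose]
    ring
  have hsum := HasDerivAt.fun_sum (u := range s) fun i _ => hterm i
  rw [sum_range_sub G s] at hsum
  have hG0 : G 0 = 0 := by simp [hG]
  rw [hG0, sub_zero] at hsum
  exact hsum

theorem B_strictMonoOn (r s : ℕ) (hs : 1 ≤ s) (hrs : s ≤ r) :
    StrictMonoOn (B r s) (Icc 0 1) := by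
  apply strictMonoOn_of_deriv_pos (convex_Icc 0 1)
  · exact fun x _ => (hasDerivAt_B r s x).continuousAt.continuousWithinAt
  · intro x hx
    rw [interior_Icc] at hx
    rw [(hasDerivAt_B r s x).deriv]
    have hchoose : (0 : ℝ) < r.choose s := by exact_mod_cast Nat.choose_pos hrs
    have hs' : (0 : ℝ) < s := by exact_mod_cast hs
    have hx₁ : 0 < 1 - x := sub_pos.mpr hx.2
    have hx₀ : 0 < x := hx.1
    positivity

theorem f_succ_sub_f (r s k : ℕ) (x y z : ℝ) :
    f r s (k + 1) x y - f r s k y z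
      = (k + 1) * ((B r s y - B r s z) + (B r s y - B r s x)) - 2 * (x - y) := by
  unfold f
  push_cast
  ring

theorem lt_of_f_succ_eq_zero {r s k : ℕ} {x y z : ℝ} (hB : StrictMonoOn (B r s) (Icc 0 1))
    (hx : x ∈ Icc (0 : ℝ) 1) (hy : y ∈ Icc (0 : ℝ) 1) (hz : z ∈ Icc (0 : ℝ) 1) (hzy : z < y)
    (hfy : f r s k y z = 0) (hfx : f r s (k + 1) x y = 0) : y < x := by
  by_contra! hxy
  have hBzy : B r s z < B r s y := hB hz hy hzy
  have hBxy : B r s x ≤ B r s y := hB.monotoneOn hx hy hxy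
  have hpos : 0 < ((k : ℝ) + 1) * ((B r s y - B r s z) + (B r s y - B r s x)) :=
    mul_pos (by positivity) (by linarith)
  have hdiff := f_succ_sub_f r s k x y z
  rw [hfx, hfy] at hdiff
  linarith

/-- The sequence `(p_k)` (given by `p_0 = 0` and `p_k ∈ (0,1)` the unique root of
`f_k(·, p_{k-1})`) is strictly increasing: `p_{k-1} < p_k` for every `k ≥ 1`. -/
theorem stmt_1 (r s : ℕ) (hs : 1 ≤ s) (hrs : s ≤ r) (p : ℕ → ℝ)
    (hp0 : p 0 = 0)
    (hp : ∀ k, 1 ≤ k → p k ∈ Set.Ioo (0 : ℝ) 1 ∧ f r s k (p k) (p (k - 1)) = 0) :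
    ∀ k, 1 ≤ k → p (k - 1) < p k := by
  have hmem : ∀ k, p k ∈ Icc (0 : ℝ) 1 := by
    rintro (_ | k)
    · simp [hp0]
    · exact Ioo_subset_Icc_self (hp (k + 1) (by omega)).1
  intro k hk
  induction k, hk using Nat.le_induction with
  | base => simpa [hp0] using (hp 1 le_rfl).1.1
  | succ k hk ih =>
    rw [Nat.add_sub_cancel]
    have hfk := (hp k hk).2
    have hfk₁ := (hp (k + 1) (by omega)).2
    rw [Nat.add_sub_cancel] at hfk₁
    exact lt_of_f_succ_eq_zero (B_strictMonoOn r s hs hrs) (hmem _) (hmem _) (hmem _) ih hfk hfk₁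
end

section
/- As k → ∞, p_k converges to p_*, the smallest root of B_{r,s}(p) − 2p + 1 = 0 in (0,1]. -/
section Monotonicity

variable {r s : ℕ}

@[fun_prop]
lemma continuous_B (r s : ℕ) : Continuous (B r s) := by
  unfold B; fun_prop

lemma B_zero (hrs : s ≤ r) : B r s 0 = 0 :=
  Finset.sum_eq_zero fun i hi => by
    have : r - i ≠ 0 := by have := Finset.mem_range.mp hi; omega
    simp [zero_pow this]

noncomputable def derivB (r : ℕ) : ℕ → ℝ → ℝ
  | 0, _ => 0
  | j + 1, x => r * (r - 1).choose j * x ^ (r - 1 - j) * (1 - x) ^ j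

lemma hasDerivAt_B_summand {i : ℕ} (hi : i < r) (x : ℝ) :
    HasDerivAt (fun y : ℝ => (r.choose i : ℝ) * y ^ (r - i) * (1 - y) ^ i)
      (derivB r (i + 1) x - derivB r i x) x := by
  obtain ⟨m, rfl⟩ : ∃ m, r = m + i + 1 := ⟨r - i - 1, by omega⟩
  rw [show m + i + 1 - i = m + 1 by omega]
  have hderiv := (((hasDerivAt_pow (m + 1) x).const_mul ((m + i + 1).choose i : ℝ)).mul
    (((hasDerivAt_id x).const_sub 1).pow i))
  refine hderiv.congr_deriv ?_
  have hchoose : ((m + i + 1 : ℕ) : ℝ) * (m + i).choose i = (m + i + 1).choose i * (m + 1) := by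
    have := Nat.choose_mul_succ_eq (m + i) i
    rw [show m + i + 1 - i = m + 1 by omega, mul_comm] at this
    exact_mod_cast this
  cases i with
  | zero => simp [derivB]
  | succ j =>
    have hchoose' : ((m + (j + 1) + 1 : ℕ) : ℝ) * (m + (j + 1)).choose j
        = (m + (j + 1) + 1).choose (j + 1) * (j + 1) := by
      exact_mod_cast Nat.add_one_mul_choose_eq (m + (j + 1)) j
    simp only [derivB, Nat.add_sub_cancel, Pi.pow_apply, id, show m + (j + 1) - j = m + 1 by omega]
    push_cast at hchoose hchoose' ⊢
    linear_combination (-x ^ m * (1 - x) ^ (j + 1)) * hchoose + x ^ (m + 1) * (1 - x) ^ j * hchoose'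

lemma hasDerivAt_B_s3 (hrs : s ≤ r) (x : ℝ) : HasDerivAt (B r s) (derivB r s x) x := by
  induction s with
  | zero =>
    have hB0 : B r 0 = fun _ => 0 := by funext; simp [B]
    simpa [hB0, derivB] using hasDerivAt_const x (0 : ℝ)
  | succ j ih =>
    have hB : B r (j + 1) = fun y => B r j y + (r.choose j : ℝ) * y ^ (r - j) * (1 - y) ^ j := by
      funext y; simp [B, Finset.sum_range_succ]
    rw [hB]
    exact ((ih (by omega)).add (hasDerivAt_B_summand (by omega : j < r) x)).congr_deriv (by ring)

lemma derivB_pos (hs : 1 ≤ s) (hrs : s ≤ r) {x : ℝ} (hx : x ∈ Set.Ioo 0 1) :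
    0 < derivB r s x := by
  obtain ⟨j, rfl⟩ : ∃ j, s = j + 1 := ⟨s - 1, by omega⟩
  have hr : (0 : ℝ) < r := by exact_mod_cast (by omega : 0 < r)
  have hc : (0 : ℝ) < (r - 1).choose j := by exact_mod_cast Nat.choose_pos (by omega)
  have hx0 := hx.1
  have hx1 := sub_pos.2 hx.2
  simp only [derivB]
  positivity

lemma strictMonoOn_B (hs : 1 ≤ s) (hrs : s ≤ r) : StrictMonoOn (B r s) (Set.Icc 0 1) :=
  strictMonoOn_of_deriv_pos (convex_Icc 0 1) (continuous_B r s).continuousOn fun x hx => by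
    rw [interior_Icc] at hx
    rw [(hasDerivAt_B_s3 hrs x).deriv]
    exact derivB_pos hs hrs hx

end Monotonicity

lemma not_bddAbove_of_div_le_sub {b : ℕ → ℝ} {m : ℝ} (hm : 0 < m)
    (h : ∀ k : ℕ, m / (k + 2) ≤ b (k + 1) - b k) : ¬ BddAbove (Set.range b) := by
  rintro ⟨M, hM⟩
  have hdiff : Summable fun k => b (k + 1) - b k :=
    summable_of_sum_range_le (c := M - b 0)
      (fun k => (by positivity : 0 ≤ m / (k + 2)).trans (h k)) fun n => by
      rw [Finset.sum_range_sub]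
      linarith [hM ⟨n, rfl⟩]
  have hharm : Summable fun k : ℕ => 1 / ((k + 2 : ℕ) : ℝ) := by
    refine ((hdiff.of_nonneg_of_le (fun k => by positivity) h).div_const m).congr fun k => ?_
    push_cast
    field_simp
  exact Real.not_summable_one_div_natCast ((summable_nat_add_iff 2).1 hharm)

section Iteration

variable {r s : ℕ} {pstar : ℝ}

lemma B_sub_two_mul_add_one_pos (hrs : s ≤ r)
    (hpstar : IsLeast {q : ℝ | q ∈ Set.Ioc (0 : ℝ) 1 ∧ B r s q - 2 * q + 1 = 0} pstar)
    {x : ℝ} (hx0 : 0 ≤ x) (hx : x < pstar) : 0 < B r s x - 2 * x + 1 := by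
  by_contra! hneg
  have h0 : B r s 0 - 2 * 0 + 1 = 1 := by rw [B_zero hrs]; ring
  obtain ⟨z, hz, hz0⟩ := intermediate_value_Icc' hx0
    (by fun_prop : ContinuousOn (fun y => B r s y - 2 * y + 1) (Set.Icc 0 x))
    ⟨hneg, h0.symm ▸ zero_le_one⟩
  have hz_pos : 0 < z := hz.1.lt_of_ne (by rintro rfl; simp [B_zero hrs] at hz0)
  have := hpstar.2 ⟨⟨hz_pos, by linarith [hz.2, hpstar.1.1.2]⟩, hz0⟩
  linarith [hz.2]

lemma B_sub_two_mul_add_one_eq_of_f_eq_zero {k : ℕ} {x y : ℝ} (h : f r s (k + 1) x y = 0) :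
    B r s x - 2 * x + 1 = (k + 2) * (B r s x - B r s y) := by
  unfold f at h
  push_cast at h
  linear_combination h

lemma lt_and_lt_of_f_eq_zero (hrs : s ≤ r) (hB : StrictMonoOn (B r s) (Set.Icc 0 1))
    (hpstar : IsLeast {q : ℝ | q ∈ Set.Ioc (0 : ℝ) 1 ∧ B r s q - 2 * q + 1 = 0} pstar)
    {k : ℕ} {x y : ℝ} (hy0 : 0 ≤ y) (hy : y < pstar) (hx : x ∈ Set.Ioo 0 1)
    (h : f r s (k + 1) x y = 0) : y < x ∧ x < pstar := by
  have hgap := B_sub_two_mul_add_one_eq_of_f_eq_zero h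
  obtain ⟨⟨hpstar0, hpstar1⟩, hroot⟩ := hpstar.1
  have hxI : x ∈ Set.Icc (0 : ℝ) 1 := ⟨hx.1.le, hx.2.le⟩
  have hyI : y ∈ Set.Icc (0 : ℝ) 1 := ⟨hy0, by linarith⟩
  have hx_lt : x < pstar := by
    by_contra! hle
    -- then `B x - 2x + 1 ≤ B x - B pstar < B x - B y`, against the factor `k + 2 ≥ 1`
    have h1 : B r s pstar ≤ B r s x := hB.monotoneOn ⟨hpstar0.le, hpstar1⟩ hxI hle
    have h2 : B r s y < B r s pstar := hB hyI ⟨hpstar0.le, hpstar1⟩ hy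
    nlinarith
  refine ⟨(hB.lt_iff_lt hyI hxI).1 ?_, hx_lt⟩
  have := B_sub_two_mul_add_one_pos hrs hpstar hx.1.le hx_lt
  nlinarith

lemma le_iSup_of_B_sub_two_mul_add_one_eq (hrs : s ≤ r) (hB : StrictMonoOn (B r s) (Set.Icc 0 1))
    (hpstar : IsLeast {q : ℝ | q ∈ Set.Ioc (0 : ℝ) 1 ∧ B r s q - 2 * q + 1 = 0} pstar)
    {p : ℕ → ℝ} (hbound : ∀ k, 0 ≤ p k ∧ p k < pstar)
    (hgap : ∀ k : ℕ, B r s (p (k + 1)) - 2 * p (k + 1) + 1 =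
      (k + 2) * (B r s (p (k + 1)) - B r s (p k))) :
    pstar ≤ ⨆ k, p k := by
  have hbdd : BddAbove (Set.range p) := ⟨pstar, Set.forall_mem_range.2 fun k => (hbound k).2.le⟩
  set L := ⨆ k, p k
  by_contra! hL
  have hL0 : 0 ≤ L := (hbound 0).1.trans (le_ciSup hbdd 0)
  obtain ⟨x₀, hx₀, hmin⟩ := isCompact_Icc.exists_isMinOn (Set.nonempty_Icc.2 hL0)
    (by fun_prop : ContinuousOn (fun y => B r s y - 2 * y + 1) (Set.Icc 0 L))
  have hm : 0 < B r s x₀ - 2 * x₀ + 1 :=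
    B_sub_two_mul_add_one_pos hrs hpstar hx₀.1 (hx₀.2.trans_lt hL)
  refine not_bddAbove_of_div_le_sub hm (b := fun k => B r s (p k)) (fun k => ?_)
    ⟨B r s pstar, ?_⟩
  · have hk : B r s x₀ - 2 * x₀ + 1 ≤ B r s (p (k + 1)) - 2 * p (k + 1) + 1 :=
      hmin ⟨(hbound (k + 1)).1, le_ciSup hbdd (k + 1)⟩
    rw [div_le_iff₀ (by positivity)]
    linarith [hgap k]
  · rintro _ ⟨k, rfl⟩
    obtain ⟨hpstar0, hpstar1⟩ := hpstar.1.1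
    exact hB.monotoneOn ⟨(hbound k).1, by linarith [(hbound k).2]⟩ ⟨hpstar0.le, hpstar1⟩
      (hbound k).2.le

end Iteration

/-- As `k → ∞`, `p_k` converges to `p_*`, the smallest root of
`B_{r,s}(p) - 2p + 1 = 0` in `(0,1]`. -/
theorem stmt_3 (r s : ℕ) (hs : 1 ≤ s) (hrs : s ≤ r) (p : ℕ → ℝ)
    (hp0 : p 0 = 0)
    (hp : ∀ k, 1 ≤ k → p k ∈ Set.Ioo (0 : ℝ) 1 ∧ f r s k (p k) (p (k - 1)) = 0)
    (pstar : ℝ)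
    (hpstar : IsLeast {q : ℝ | q ∈ Set.Ioc (0 : ℝ) 1 ∧ B r s q - 2 * q + 1 = 0} pstar) :
    Filter.Tendsto p Filter.atTop (nhds pstar) := by
  have hB := strictMonoOn_B hs hrs
  have hstep : ∀ k, 0 ≤ p k → p k < pstar → p k < p (k + 1) ∧ p (k + 1) < pstar :=
    fun k h0 h1 => lt_and_lt_of_f_eq_zero hrs hB hpstar h0 h1 (hp (k + 1) le_add_self).1
      (hp (k + 1) le_add_self).2
  have hbound : ∀ k, 0 ≤ p k ∧ p k < pstar := by
    intro k
    induction k with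
    | zero => exact ⟨hp0.ge, hp0 ▸ hpstar.1.1.1⟩
    | succ k ih => exact ⟨(hp (k + 1) le_add_self).1.1.le, (hstep k ih.1 ih.2).2⟩
  have hmono : Monotone p :=
    monotone_nat_of_le_succ fun k => (hstep k (hbound k).1 (hbound k).2).1.le
  have hbdd : BddAbove (Set.range p) := ⟨pstar, Set.forall_mem_range.2 fun k => (hbound k).2.le⟩
  have hlim : ⨆ k, p k = pstar :=
    (ciSup_le fun k => (hbound k).2.le).antisymm
      (le_iSup_of_B_sub_two_mul_add_one_eq hrs hB hpstar hbound fun k =>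
        B_sub_two_mul_add_one_eq_of_f_eq_zero (hp (k + 1) le_add_self).2)
  exact hlim ▸ tendsto_atTop_ciSup hmono hbdd
end

section
/- Suppose r ≥ s ≥ 2. If 1 − p_k → 0 as k → ∞, then 1 − p_k = O(1/k²); that is, there exists a constant C > 0 such that 1 − p_k ≤ C/k² for all k ≥ 1. -/
open Filter Topology Finset

section Binomial

variable {r s : ℕ}

lemma one_sub_B_eq_sum_Ico (hsr : s ≤ r) (x : ℝ) :
    1 - B r s x = ∑ i ∈ Ico s (r + 1), (r.choose i : ℝ) * x ^ (r - i) * (1 - x) ^ i := by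
  have hsum : ∑ i ∈ range (r + 1), (r.choose i : ℝ) * x ^ (r - i) * (1 - x) ^ i = 1 :=
    calc _ = ((1 - x) + x) ^ r := by rw [add_pow]; exact sum_congr rfl fun i _ => by ring
      _ = 1 := by rw [sub_add_cancel, one_pow]
  have hsplit := sum_range_add_sum_Ico (fun i => (r.choose i : ℝ) * x ^ (r - i) * (1 - x) ^ i)
    (Nat.le_succ_of_le hsr)
  rw [B]
  linarith

lemma one_sub_B_nonneg (hsr : s ≤ r) {x : ℝ} (hx₀ : 0 ≤ x) (hx₁ : x ≤ 1) :
    0 ≤ 1 - B r s x := by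
  rw [one_sub_B_eq_sum_Ico hsr]
  have : 0 ≤ 1 - x := by linarith
  positivity

lemma one_sub_B_le (hs : 2 ≤ s) (hsr : s ≤ r) {x : ℝ} (hx₀ : 0 ≤ x) (hx₁ : x ≤ 1) :
    1 - B r s x ≤ 2 ^ r * (1 - x) ^ 2 := by
  have hy₀ : 0 ≤ 1 - x := by linarith
  have hy₁ : 1 - x ≤ 1 := by linarith
  have hchoose : ∑ i ∈ Ico s (r + 1), (r.choose i : ℝ) ≤ 2 ^ r := by
    calc ∑ i ∈ Ico s (r + 1), (r.choose i : ℝ)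
        ≤ ∑ i ∈ range (r + 1), (r.choose i : ℝ) :=
          sum_le_sum_of_subset_of_nonneg (fun i hi => mem_range.mpr (mem_Ico.mp hi).2)
            fun _ _ _ => by positivity
      _ = 2 ^ r := by exact_mod_cast Nat.sum_range_choose r
  rw [one_sub_B_eq_sum_Ico hsr]
  calc ∑ i ∈ Ico s (r + 1), (r.choose i : ℝ) * x ^ (r - i) * (1 - x) ^ i
      ≤ ∑ i ∈ Ico s (r + 1), (r.choose i : ℝ) * 1 * (1 - x) ^ 2 := by
        refine sum_le_sum fun i hmem => ?_
        have hi : 2 ≤ i := hs.trans (mem_Ico.mp hmem).1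
        exact mul_le_mul (mul_le_mul_of_nonneg_left (pow_le_one₀ hx₀ hx₁) (by positivity))
          (pow_le_pow_of_le_one hy₀ hy₁ hi) (by positivity) (by positivity)
    _ ≤ 2 ^ r * (1 - x) ^ 2 := by
        rw [← sum_mul]
        simp only [mul_one]
        gcongr

lemma f_eq_one_sub_B (k : ℕ) (x y : ℝ) :
    f r s k x y = 2 * (1 - x) - (k + 1) * (1 - B r s y) + k * (1 - B r s x) := by
  unfold f; ring

end Binomial

lemma frequently_natCast_mul_lt_of_summable {u : ℕ → ℝ} (hu : Summable u) {c : ℝ} (hc : 0 < c) :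
    ∃ᶠ n : ℕ in atTop, n * u n < c := by
  by_contra h
  have hbound : ∀ᶠ n : ℕ in atTop, ‖c * (n : ℝ)⁻¹‖ ≤ u n := by
    filter_upwards [not_frequently.mp h, eventually_gt_atTop 0] with n hn hn₀
    have hn₀ : (0 : ℝ) < n := by exact_mod_cast hn₀
    rw [Real.norm_of_nonneg (by positivity), ← div_eq_mul_inv, div_le_iff₀' hn₀]
    exact not_lt.mp hn
  exact Real.not_summable_natCast_inv
    ((summable_mul_left_iff hc.ne').mp (hu.of_norm_bounded_eventually_nat hbound))

lemma summable_of_add_le {u w : ℕ → ℝ} {N : ℕ} (hu : ∀ n ≥ N, 0 ≤ u (n + 1))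
    (hw : ∀ n ≥ N, 0 ≤ w n) (h : ∀ n ≥ N, u (n + 1) + w (n + 1) ≤ w n) : Summable u := by
  have htele : ∀ n, ∑ i ∈ range n, u (i + (N + 1)) + w (N + n) ≤ w N := by
    intro n
    induction n with
    | zero => simp
    | succ n ih =>
      have := h (N + n) (by omega)
      rw [sum_range_succ, show n + (N + 1) = N + n + 1 by omega, ← add_assoc N n 1]
      linarith
  have hu' (n : ℕ) : 0 ≤ u (n + (N + 1)) := by rw [← add_assoc]; exact hu _ (by omega)
  refine (summable_nat_add_iff (N + 1)).mp (summable_of_sum_range_le (c := w N) hu' fun n => ?_)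
  linarith [htele n, hw (N + n) (by omega)]

lemma le_half_and_natCast_mul_le_of_le_sq {a : ℕ → ℝ} {m : ℕ} (hm : 1 ≤ m)
    (ha₀ : ∀ n ≥ m, 0 ≤ a n) (ha : ∀ n ≥ m, a (n + 1) ≤ a n ^ 2) (ham : a m ≤ 1 / 2) :
    ∀ n ≥ m, a n ≤ 1 / 2 ∧ n * a n ≤ m * a m := by
  intro n hn
  induction n, hn using Nat.le_induction with
  | base => exact ⟨ham, le_rfl⟩
  | succ n hmn ih =>
    have h₀ := ha₀ n hmn
    have hhalf : a (n + 1) ≤ a n / 2 := (ha n hmn).trans (by nlinarith [ih.1])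
    have hn : (1 : ℝ) ≤ n := by exact_mod_cast hm.trans hmn
    push_cast
    constructor
    · linarith [ih.1]
    · nlinarith [ih.2, ha₀ (n + 1) (by omega)]

section Recurrence

variable {ε q : ℕ → ℝ} {R : ℝ}

lemma mul_succ_le_sq (hR : 0 ≤ R)
    (hrec : ∀ k, 2 * ε (k + 1) = (k + 2) * q k - (k + 1) * q (k + 1))
    (hq₀ : ∀ k ≥ 1, 0 ≤ q k) (hqε : ∀ k ≥ 1, q k ≤ R * ε k ^ 2) {k : ℕ} (hk : 1 ≤ k) :
    R * (k + 1 + 2) * ε (k + 1) ≤ (R * (k + 2) * ε k) ^ 2 := by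
  have hk₀ : (0 : ℝ) ≤ k := k.cast_nonneg
  have hstep : 2 * ε (k + 1) ≤ (k + 2) * (R * ε k ^ 2) := by
    have := hq₀ (k + 1) (by omega)
    have := mul_le_mul_of_nonneg_left (hqε k hk) (by positivity : (0 : ℝ) ≤ k + 2)
    nlinarith [hrec k]
  calc R * (k + 1 + 2) * ε (k + 1) = R * (k + 3) / 2 * (2 * ε (k + 1)) := by ring
    _ ≤ R * (k + 3) / 2 * ((k + 2) * (R * ε k ^ 2)) := by gcongr
    _ = (k + 3) / 2 * ((k + 2) * (R * (R * ε k ^ 2))) := by ring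
    _ ≤ (k + 2) * ((k + 2) * (R * (R * ε k ^ 2))) := by gcongr; linarith
    _ = (R * (k + 2) * ε k) ^ 2 := by ring

lemma summable_of_tendsto_zero (hR : 0 < R) (hε₀ : ∀ k ≥ 1, 0 ≤ ε k)
    (hrec : ∀ k, 2 * ε (k + 1) = (k + 2) * q k - (k + 1) * q (k + 1))
    (hq₀ : ∀ k ≥ 1, 0 ≤ q k) (hqε : ∀ k ≥ 1, q k ≤ R * ε k ^ 2)
    (hlim : Tendsto ε atTop (𝓝 0)) : Summable ε := by
  obtain ⟨N, hN⟩ := eventually_atTop.mp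
    ((hlim.eventually (Iio_mem_nhds (by positivity : (0 : ℝ) < 1 / (2 * R)))).and
      (eventually_ge_atTop 1))
  -- Once `R ε_n ≤ 1/2` we have `2 q_n ≤ ε_n`, so `n q_n + ε_n` decreases by at least `ε_{n+1}`.
  refine summable_of_add_le (N := N) (w := fun n => n * q n + ε n)
    (fun n hn => hε₀ _ (by omega)) (fun n hn => ?_) fun n hn => ?_
  · have hn₁ := (hN n hn).2
    have := hq₀ n hn₁
    have := hε₀ n hn₁
    positivity
  · obtain ⟨hsmall, hn₁⟩ := hN n hn
    have hq : 2 * q n ≤ ε n := by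
      have hRε : R * ε n ≤ 1 / 2 := by
        rw [lt_div_iff₀ (by positivity)] at hsmall
        linarith
      nlinarith [hqε n hn₁, hε₀ n hn₁]
    have := hrec n
    push_cast
    linarith

lemma exists_natCast_sq_mul_le (hR : 1 ≤ R) (hε : ∀ k ≥ 1, 0 ≤ ε k ∧ ε k ≤ 1)
    (hrec : ∀ k, 2 * ε (k + 1) = (k + 2) * q k - (k + 1) * q (k + 1))
    (hq₀ : ∀ k ≥ 1, 0 ≤ q k) (hqε : ∀ k ≥ 1, q k ≤ R * ε k ^ 2)
    (hlim : Tendsto ε atTop (𝓝 0)) : ∃ C > 0, ∀ k : ℕ, 1 ≤ k → (k : ℝ) ^ 2 * ε k ≤ C := by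
  have hR₀ : 0 < R := by linarith
  have hsum := summable_of_tendsto_zero hR₀ (fun k hk => (hε k hk).1) hrec hq₀ hqε hlim
  obtain ⟨m, hmε, hm⟩ := ((frequently_natCast_mul_lt_of_summable hsum
    (by positivity : (0 : ℝ) < 1 / (6 * R))).and_eventually (eventually_ge_atTop 1)).exists
  have hm₁ : (1 : ℝ) ≤ m := by exact_mod_cast hm
  -- `m ε_m < 1/(6R)` puts `a_m = R (m + 2) ε_m` below `1/2`.
  have ham : R * (m + 2) * ε m ≤ 1 / 2 := by
    rw [lt_div_iff₀ (by positivity)] at hmε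
    nlinarith [(hε m hm).1]
  have ha := le_half_and_natCast_mul_le_of_le_sq (a := fun k => R * (k + 2) * ε k) hm
    (fun k hk => mul_nonneg (by positivity) (hε k (hm.trans hk)).1)
    (fun k hk => by exact_mod_cast mul_succ_le_sq hR₀.le hrec hq₀ hqε (hm.trans hk)) ham
  refine ⟨(m : ℝ) ^ 2, by positivity, fun k hk => ?_⟩
  obtain ⟨hε₀, hε₁⟩ := hε k hk
  rcases le_or_gt m k with hmk | hkm
  · have hk' : (k : ℝ) ≤ R * (k + 2) := by nlinarith
    calc (k : ℝ) ^ 2 * ε k = k * (k * ε k) := by ring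
      _ ≤ k * (R * (k + 2) * ε k) := by gcongr
      _ ≤ m * (R * (m + 2) * ε m) := (ha k hmk).2
      _ ≤ (m : ℝ) ^ 2 := by nlinarith
  · have hkm' : (k : ℝ) ≤ m := by exact_mod_cast hkm.le
    calc (k : ℝ) ^ 2 * ε k ≤ (k : ℝ) ^ 2 * 1 := by gcongr
      _ ≤ (m : ℝ) ^ 2 := by rw [mul_one]; gcongr

end Recurrence

theorem stmt_11_general (r s : ℕ) (hs : 2 ≤ s) (hrs : s ≤ r) (p : ℕ → ℝ)
    (hp : ∀ k, 1 ≤ k → p k ∈ Set.Ioo (0 : ℝ) 1 ∧ f r s k (p k) (p (k - 1)) = 0)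
    (hlim : Filter.Tendsto (fun k => 1 - p k) Filter.atTop (nhds 0)) :
    ∃ C : ℝ, 0 < C ∧ ∀ k : ℕ, 1 ≤ k → 1 - p k ≤ C / (k : ℝ) ^ 2 := by
  have hrec (k : ℕ) : 2 * (1 - p (k + 1)) =
      (k + 2) * (1 - B r s (p k)) - (k + 1) * (1 - B r s (p (k + 1))) := by
    have h := (hp (k + 1) (by omega)).2
    rw [f_eq_one_sub_B, Nat.add_sub_cancel] at h
    push_cast at h
    linarith
  have hp₀₁ (k : ℕ) (hk : 1 ≤ k) : 0 ≤ p k ∧ p k ≤ 1 :=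
    ⟨(hp k hk).1.1.le, (hp k hk).1.2.le⟩
  obtain ⟨C, hC, hbound⟩ := exists_natCast_sq_mul_le (R := 2 ^ r) (one_le_pow₀ one_le_two)
    (fun k hk => ⟨by linarith [hp₀₁ k hk], by linarith [hp₀₁ k hk]⟩) hrec
    (fun k hk => one_sub_B_nonneg hrs (hp₀₁ k hk).1 (hp₀₁ k hk).2)
    (fun k hk => one_sub_B_le hs hrs (hp₀₁ k hk).1 (hp₀₁ k hk).2) hlim
  refine ⟨C, hC, fun k hk => ?_⟩
  rw [le_div_iff₀ (by positivity), mul_comm]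
  exact hbound k hk

/-- For `r ≥ s ≥ 2`: if `1 - p_k → 0` as `k → ∞`, then `1 - p_k = O(1/k²)`:
there is a constant `C > 0` with `1 - p_k ≤ C/k²` for all `k ≥ 1`. -/
theorem stmt_11 (r s : ℕ) (hs : 2 ≤ s) (hrs : s ≤ r) (p : ℕ → ℝ)
    (hp0 : p 0 = 0)
    (hp : ∀ k, 1 ≤ k → p k ∈ Set.Ioo (0 : ℝ) 1 ∧ f r s k (p k) (p (k - 1)) = 0)
    (hlim : Filter.Tendsto (fun k => 1 - p k) Filter.atTop (nhds 0)) :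
    ∃ C : ℝ, 0 < C ∧ ∀ k : ℕ, 1 ≤ k → 1 - p k ≤ C / (k : ℝ) ^ 2 :=
  stmt_11_general r s hs hrs p hp hlim
end

section
/- For the greedy-choice sequence with r = 2 and s = 1: for every real a with 0 < a < 2, if there exists an integer j > exp(3a/(2−a)) with p_j ≤ 1 − a/log(j+1), then p_k < 1 − a/log(k+1) for every integer k > j. -/
/-!
Write `L = log (m + 1)` and `M = log (m + 2)`. The recurrence reads
`(m + 1) p_{m+1}² + 2 p_{m+1} = (m + 2) p_m² + 1`, and `x ↦ (m + 1) x² + 2 x` is increasing on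
`x ≥ 0`, so `p_m ≤ 1 - a / L` gives `p_{m+1} < 1 - a / M` as soon as
`(m + 2) (1 - a / L)² + 1 < (m + 1) (1 - a / M)² + 2 (1 - a / M)`.
This holds once `L > 2a / (2 - a)`, because `(m + 2) (M - L) ≥ 1`; the hypothesis on `j` gives
that threshold for every index `m ≥ j`, and induction on `k` concludes.
-/

open Real

lemma one_le_add_one_mul_log_sub_log {x : ℝ} (hx : 0 < x) :
    1 ≤ (x + 1) * (log (x + 1) - log x) := by
  have h := one_sub_inv_le_log_of_pos (div_pos (by linarith : 0 < x + 1) hx)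
  rw [log_div (by linarith) hx.ne', inv_div, one_sub_div (by linarith : x + 1 ≠ 0),
    add_sub_cancel_left, div_le_iff₀ (by linarith)] at h
  linarith

lemma add_one_mul_sq_add_one_lt {a L M K : ℝ} (ha : 0 < a) (hL : 0 < L) (hLM : L ≤ M)
    (haL : a * (L + 2) < 2 * L) (hK : 1 ≤ (M - L) * (K + 1)) :
    (K + 1) * (1 - a / L) ^ 2 + 1 < K * (1 - a / M) ^ 2 + 2 * (1 - a / M) := by
  have hM : 0 < M := hL.trans_le hLM
  set Q := 2 * L * M - a * (L + M)
  -- `(1-a/M)² - (1-a/L)² = a (M-L) Q / (LM)²`; the leftover `-(a/M)²` is paid by `Q > a L²`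
  have hE : K * (1 - a / M) ^ 2 + 2 * (1 - a / M) - ((K + 1) * (1 - a / L) ^ 2 + 1) =
      a * ((M - L) * (K + 1) * Q - a * L ^ 2) / (L * M) ^ 2 := by
    field_simp
    ring
  have hQ : a * L ^ 2 < Q := by
    have : a * L ^ 2 < L * (2 * L - 2 * a) := by nlinarith
    nlinarith [mul_nonneg (sub_nonneg.2 hLM) (by nlinarith : (0 : ℝ) ≤ 2 * L - a)]
  have hnum : 0 < (M - L) * (K + 1) * Q - a * L ^ 2 := by
    nlinarith [mul_le_mul_of_nonneg_right hK (by positivity : (0 : ℝ) ≤ a * L ^ 2)]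
  have := div_pos (mul_pos ha hnum) (by positivity : (0 : ℝ) < (L * M) ^ 2)
  linarith

lemma lt_of_mul_sq_add_two_mul_lt {K x y : ℝ} (hK : 0 ≤ K) (hy : 0 ≤ y)
    (h : K * x ^ 2 + 2 * x < K * y ^ 2 + 2 * y) : x < y := by
  by_contra! hyx
  nlinarith [mul_le_mul_of_nonneg_left (pow_le_pow_left₀ hy hyx 2) hK]

lemma lt_one_sub_div_log_succ (p : ℕ → ℝ)
    (hp : ∀ k, 1 ≤ k → p k ∈ Set.Ioo (0 : ℝ) 1 ∧
      ((k : ℝ) + 1) * p (k - 1) ^ 2 - (k : ℝ) * p k ^ 2 - 2 * p k + 1 = 0)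
    {a : ℝ} (ha : 0 < a) {m : ℕ} (hm : 1 ≤ m)
    (hthr : a * (log ((m : ℝ) + 1) + 2) < 2 * log ((m : ℝ) + 1))
    (h : p m ≤ 1 - a / log ((m : ℝ) + 1)) :
    p (m + 1) < 1 - a / log ((m : ℝ) + 1 + 1) := by
  set L := log ((m : ℝ) + 1)
  set M := log ((m : ℝ) + 1 + 1)
  have hm0 : (0 : ℝ) < m + 1 := by positivity
  have hL : 0 < L := log_pos (by norm_cast; omega)
  have hLM : L ≤ M := log_le_log hm0 (by linarith)
  have haM : a < M := by nlinarith
  have hpm : 0 ≤ p m := (hp m hm).1.1.le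
  obtain ⟨-, hrec⟩ := hp (m + 1) (by omega)
  rw [Nat.add_sub_cancel] at hrec
  push_cast at hrec
  have hkey := add_one_mul_sq_add_one_lt (K := (m : ℝ) + 1) ha hL hLM hthr
    (by rw [mul_comm]; exact one_le_add_one_mul_log_sub_log hm0)
  have hbound : 0 ≤ 1 - a / M := sub_nonneg.2 ((div_le_one₀ (hL.trans_le hLM)).2 haM.le)
  refine lt_of_mul_sq_add_two_mul_lt hm0.le hbound ?_
  nlinarith [mul_le_mul_of_nonneg_left (pow_le_pow_left₀ hpm h 2)
    (by positivity : (0 : ℝ) ≤ m + 1 + 1)]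

theorem stmt_17_general (p : ℕ → ℝ)
    (hp : ∀ k, 1 ≤ k → p k ∈ Set.Ioo (0 : ℝ) 1 ∧
      ((k : ℝ) + 1) * p (k - 1) ^ 2 - (k : ℝ) * p k ^ 2 - 2 * p k + 1 = 0) :
    ∀ a : ℝ, 0 < a → a < 2 → ∀ j : ℕ, Real.exp (3 * a / (2 - a)) < (j : ℝ) →
      p j ≤ 1 - a / Real.log ((j : ℝ) + 1) →
      ∀ k : ℕ, j < k → p k < 1 - a / Real.log ((k : ℝ) + 1) := by
  intro a ha ha2 j hj hpj k hk
  have hj0 : (0 : ℝ) < j := (exp_pos _).trans hj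
  have hthr : ∀ n : ℕ, j ≤ n → a * (log ((n : ℝ) + 1) + 2) < 2 * log ((n : ℝ) + 1) := by
    intro n hn
    have hlog : 3 * a / (2 - a) < log ((n : ℝ) + 1) :=
      (lt_log_iff_exp_lt (by positivity)).2 (hj.trans_le (by exact_mod_cast hn.trans n.le_succ))
    rw [div_lt_iff₀ (by linarith)] at hlog
    nlinarith
  have hj1 : 1 ≤ j := by exact_mod_cast hj0
  induction k, hk using Nat.le_induction with
  | base => exact_mod_cast lt_one_sub_div_log_succ p hp ha hj1 (hthr j le_rfl) hpj
  | succ n hn ih =>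
    exact_mod_cast lt_one_sub_div_log_succ p hp ha (by omega) (hthr n (by omega)) ih.le

/-- Greedy choice with `r = 2`, `s = 1`: for every real `a` with `0 < a < 2`, if
there is an integer `j > exp(3a/(2-a))` with `p_j ≤ 1 - a/log(j+1)`, then
`p_k < 1 - a/log(k+1)` for every `k > j`. -/
theorem stmt_17 (p : ℕ → ℝ) (hp0 : p 0 = 0)
    (hp : ∀ k, 1 ≤ k → p k ∈ Set.Ioo (0 : ℝ) 1 ∧
      ((k : ℝ) + 1) * p (k - 1) ^ 2 - (k : ℝ) * p k ^ 2 - 2 * p k + 1 = 0) :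
    ∀ a : ℝ, 0 < a → a < 2 → ∀ j : ℕ, Real.exp (3 * a / (2 - a)) < (j : ℝ) →
      p j ≤ 1 - a / Real.log ((j : ℝ) + 1) →
      ∀ k : ℕ, j < k → p k < 1 - a / Real.log ((k : ℝ) + 1) :=
  stmt_17_general p hp
end
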